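/- Let φ : ℝ^n → ℝ ∪ {+∞} be proper, lower semicontinuous, asymptotically level stable and bounded below, B ∈ ℝ^{m×n}, λ > 0. Then Φ(x) = φ(x) + λ‖Bx‖₀ attains its infimum on ℝ^n. -/

import Mathlib

open Filter Topology

noncomputable def l2 {n : ℕ} (x : Fin n → ℝ) : ℝ := Real.sqrt (∑ i, (x i)^2)

noncomputable def l0 {m : ℕ} (y : Fin m → ℝ) : ℕ :=
  (Finset.univ.filter fun i => y i ≠ 0).card

/-- Asymptotic function `f_∞(x) = liminf_{x'→x, t→+∞} f(t x')/t`. -/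
noncomputable def asympFn {n : ℕ} (f : (Fin n → ℝ) → EReal) (x : Fin n → ℝ) : EReal :=
  Filter.liminf (fun p : (Fin n → ℝ) × ℝ => f (p.2 • p.1) / (p.2 : EReal)) ((𝓝 x) ×ˢ atTop)

/-- Asymptotically level stable function. -/
def ALS {n : ℕ} (f : (Fin n → ℝ) → EReal) : Prop :=
  ∀ ρ : ℝ, 0 < ρ → ∀ t : ℕ → ℝ, (∃ M : ℝ, ∀ k, |t k| ≤ M) →
  ∀ (x : ℕ → Fin n → ℝ) (xb : Fin n → ℝ),
    (∀ k, f (x k) ≤ (t k : EReal)) →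
    Tendsto (fun k => l2 (x k)) atTop atTop →
    Tendsto (fun k => (l2 (x k))⁻¹ • x k) atTop (𝓝 xb) →
    asympFn f xb = 0 →
    ∃ k0 : ℕ, ∀ k ≥ k0, f (x k - ρ • xb) ≤ (t k : EReal)

/-! An asymptotically level stable, lower semicontinuous `f` that is bounded below attains its
infimum (Auslender–Teboulle, Cor. 3.4.2): take minimum-norm points `x_k` of the sublevel sets
`{f ≤ t_k}`, `t_k ↓ inf f`. If they stay bounded, compactness gives a minimizer. Otherwise a
subsequence runs off to infinity in a unit direction `v`; level stability puts `x_k - v` in the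
same sublevel set as `x_k`, while `‖x_k - v‖ < ‖x_k‖` for large `k`.

So it suffices that Φ is asymptotically level stable. If `x_k` runs off to infinity in direction
`x̄`, every coordinate where `B x̄` is nonzero is eventually nonzero in `B x_k`, so passing from
`x_k` to `x_k - ρ x̄` does not increase `‖B·‖₀`, and the level stability of `φ` does the rest. -/

section l2

variable {n : ℕ}

lemma l2_eq_norm (x : Fin n → ℝ) : l2 x = ‖WithLp.toLp 2 x‖ := by
  simp [l2, EuclideanSpace.norm_eq]

lemma continuous_l2 : Continuous (l2 : (Fin n → ℝ) → ℝ) := by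
  simp only [funext l2_eq_norm]
  fun_prop

lemma l2_smul (c : ℝ) (x : Fin n → ℝ) : l2 (c • x) = |c| * l2 x := by
  simp [l2_eq_norm, norm_smul]

lemma isCompact_l2_le (M : ℝ) : IsCompact {x : Fin n → ℝ | l2 x ≤ M} := by
  simpa [l2_eq_norm, Set.preimage] using
    (EuclideanSpace.equiv (Fin n) ℝ).symm.toHomeomorph.isCompact_preimage.2
      (isCompact_closedBall 0 M)

lemma IsClosed.exists_l2_le {s : Set (Fin n → ℝ)} (hs : IsClosed s) (hne : s.Nonempty) :
    ∃ x ∈ s, ∀ y ∈ s, l2 x ≤ l2 y := by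
  obtain ⟨x₀, hx₀⟩ := hne
  obtain ⟨x, ⟨hxs, -⟩, hmin⟩ := ((isCompact_l2_le (l2 x₀)).inter_left hs).exists_isMinOn
    ⟨x₀, hx₀, (le_rfl : l2 x₀ ≤ l2 x₀)⟩ continuous_l2.continuousOn
  refine ⟨x, hxs, fun y hy => ?_⟩
  rcases le_total (l2 y) (l2 x₀) with h | h
  · exact hmin ⟨hy, h⟩
  · exact (hmin ⟨hx₀, (le_rfl : l2 x₀ ≤ l2 x₀)⟩).trans h

lemma eventually_norm_sub_lt_norm {ι E : Type*} [NormedAddCommGroup E] [InnerProductSpace ℝ E]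
    {l : Filter ι} {y : ι → E} {v : E} (hv : ‖v‖ = 1) (hy : Tendsto (fun k => ‖y k‖) l atTop)
    (hdir : Tendsto (fun k => ‖y k‖⁻¹ • y k) l (𝓝 v)) :
    ∀ᶠ k in l, ‖y k - v‖ < ‖y k‖ := by
  have hinner : ∀ᶠ k in l, 1 / 2 < inner ℝ (‖y k‖⁻¹ • y k) v := by
    have : Tendsto (fun k => inner ℝ (‖y k‖⁻¹ • y k) v) l (𝓝 (inner ℝ v v)) :=
      hdir.inner tendsto_const_nhds
    rw [real_inner_self_eq_norm_sq, hv] at this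
    exact this.eventually (lt_mem_nhds (by norm_num))
  filter_upwards [hinner, hy.eventually_gt_atTop 1] with k hk hk1
  rw [real_inner_smul_left] at hk
  have hpos : 0 < ‖y k‖ := by linarith
  have hyv : ‖y k‖ / 2 < inner ℝ (y k) v := by
    rw [lt_inv_mul_iff₀ hpos] at hk
    linarith
  refine lt_of_pow_lt_pow_left₀ 2 (norm_nonneg _) ?_
  rw [norm_sub_sq_real, hv]
  nlinarith

lemma eventually_l2_sub_lt {ι : Type*} {l : Filter ι} {y : ι → Fin n → ℝ} {v : Fin n → ℝ}
    (hv : l2 v = 1) (hy : Tendsto (fun k => l2 (y k)) l atTop)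
    (hdir : Tendsto (fun k => (l2 (y k))⁻¹ • y k) l (𝓝 v)) :
    ∀ᶠ k in l, l2 (y k - v) < l2 (y k) := by
  simp only [l2_eq_norm] at *
  have := (PiLp.continuous_toLp 2 _).tendsto v |>.comp hdir
  simpa using eventually_norm_sub_lt_norm hv hy this

end l2

section asympFn

variable {n : ℕ}

lemma asympFn_nonneg {f : (Fin n → ℝ) → EReal} {c : ℝ} (hc : ∀ x, (c : EReal) ≤ f x)
    (v : Fin n → ℝ) : 0 ≤ asympFn f v := by
  have hlim : Tendsto (fun p : (Fin n → ℝ) × ℝ => ((c / p.2 : ℝ) : EReal)) (𝓝 v ×ˢ atTop)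
      (𝓝 0) := by
    simpa using (EReal.tendsto_coe.2 (tendsto_const_nhds.div_atTop tendsto_snd))
  have hle : ∀ᶠ p : (Fin n → ℝ) × ℝ in 𝓝 v ×ˢ atTop,
      ((c / p.2 : ℝ) : EReal) ≤ f (p.2 • p.1) / (p.2 : EReal) := by
    filter_upwards [tendsto_snd.eventually_ge_atTop 0] with p hp
    rw [EReal.coe_div]
    exact EReal.div_le_div_right_of_nonneg (EReal.coe_nonneg.2 hp) (hc _)
  exact hlim.liminf_eq.symm.le.trans (liminf_le_liminf hle)

lemma asympFn_nonpos_of_tendsto {ι : Type*} {l : Filter ι} [l.NeBot] {f : (Fin n → ℝ) → EReal}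
    {y : ι → Fin n → ℝ} {t : ι → ℝ} {M : ℝ} {v : Fin n → ℝ} (ht : ∀ k, |t k| ≤ M)
    (hf : ∀ k, f (y k) ≤ t k) (hy : Tendsto (fun k => l2 (y k)) l atTop)
    (hdir : Tendsto (fun k => (l2 (y k))⁻¹ • y k) l (𝓝 v)) :
    asympFn f v ≤ 0 := by
  have hq : Tendsto (fun k => ((l2 (y k))⁻¹ • y k, l2 (y k))) l (𝓝 v ×ˢ atTop) :=
    hdir.prodMk hy
  have hle : ∀ᶠ k in l, f (l2 (y k) • (l2 (y k))⁻¹ • y k) / (l2 (y k) : EReal)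
      ≤ ((t k / l2 (y k) : ℝ) : EReal) := by
    filter_upwards [hy.eventually_gt_atTop 0] with k hk
    rw [smul_inv_smul₀ hk.ne', EReal.coe_div]
    exact EReal.div_le_div_right_of_nonneg (EReal.coe_nonneg.2 hk.le) (hf k)
  have hlim : Tendsto (fun k => ((t k / l2 (y k) : ℝ) : EReal)) l (𝓝 0) := by
    refine EReal.tendsto_coe.2 (squeeze_zero_norm' ?_ ((tendsto_const_nhds (x := M)).div_atTop hy))
    filter_upwards [hy.eventually_gt_atTop 0] with k hk
    rw [Real.norm_eq_abs, abs_div, abs_of_pos hk]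
    exact div_le_div_of_nonneg_right (ht k) hk.le
  calc asympFn f v ≤ liminf (fun k => f (l2 (y k) • (l2 (y k))⁻¹ • y k) / (l2 (y k) : EReal)) l :=
        liminf_le_liminf_of_le hq
    _ ≤ liminf (fun k => ((t k / l2 (y k) : ℝ) : EReal)) l := liminf_le_liminf hle
    _ = 0 := hlim.liminf_eq

end asympFn

section penalized

variable {n m : ℕ}

lemma l0_le_of_forall_ne_zero {w y : Fin m → ℝ} (h : ∀ i, w i ≠ 0 → y i ≠ 0) : l0 w ≤ l0 y :=
  Finset.card_le_card fun i => by simpa using h i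

lemma eventually_forall_ne_zero_of_tendsto_smul {ι : Type*} {l : Filter ι} {c : ι → ℝ}
    {y : ι → Fin m → ℝ} {w : Fin m → ℝ} (h : Tendsto (fun k => c k • y k) l (𝓝 w)) :
    ∀ᶠ k in l, ∀ i, w i ≠ 0 → y k i ≠ 0 := by
  refine eventually_all.2 fun i => ?_
  by_cases hi : w i = 0
  · simp [hi]
  · filter_upwards [(((continuous_apply i).tendsto w).comp h).eventually_ne hi] with k hk _ hy
    simp [hy] at hk

lemma lowerSemicontinuous_l0 : LowerSemicontinuous fun y : Fin m → ℝ => (l0 y : ℝ) := by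
  intro y z hz
  filter_upwards [eventually_forall_ne_zero_of_tendsto_smul (c := 1) (by simpa using tendsto_id)]
    with y' hy'
  exact hz.trans_le (Nat.cast_le.2 (l0_le_of_forall_ne_zero hy'))

noncomputable def penalized (φ : (Fin n → ℝ) → EReal) (B : Matrix (Fin m) (Fin n) ℝ) (lam : ℝ)
    (x : Fin n → ℝ) : EReal :=
  φ x + ((lam * (l0 (B.mulVec x) : ℝ) : ℝ) : EReal)

lemma LowerSemicontinuous.penalized {φ : (Fin n → ℝ) → EReal} (hφ : LowerSemicontinuous φ)
    (B : Matrix (Fin m) (Fin n) ℝ) {lam : ℝ} (hlam : 0 ≤ lam) :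
    LowerSemicontinuous (penalized φ B lam) := by
  have hpen : LowerSemicontinuous fun x => ((lam * (l0 (B.mulVec x) : ℝ) : ℝ) : EReal) :=
    (continuous_coe_real_ereal.comp (continuous_const_mul lam)).comp_lowerSemicontinuous
      (lowerSemicontinuous_l0.comp (Matrix.mulVecLin B).continuous_of_finiteDimensional)
      (EReal.coe_strictMono.monotone.comp (monotone_mul_left_of_nonneg hlam))
  exact hφ.add' hpen fun x => EReal.continuousAt_add (Or.inr (EReal.coe_ne_bot _))
    (Or.inr (EReal.coe_ne_top _))

lemma l0_le_card (y : Fin m → ℝ) : l0 y ≤ m :=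
  (Finset.card_filter_le _ _).trans (by simp)

theorem ALS.penalized {φ : (Fin n → ℝ) → EReal} (hals : ALS φ) {c : ℝ}
    (hc : ∀ x, (c : EReal) ≤ φ x) (B : Matrix (Fin m) (Fin n) ℝ) {lam : ℝ} (hlam : 0 ≤ lam) :
    ALS (penalized φ B lam) := by
  intro ρ hρ t ⟨M, hM⟩ x xb hx hnorm hdir _
  set s : ℕ → ℝ := fun k => t k - lam * l0 (B.mulVec (x k)) with hs_def
  have hs : ∀ k, |s k| ≤ M + lam * m := fun k =>
    calc |s k| ≤ |t k| + |lam * l0 (B.mulVec (x k))| := abs_sub _ _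
      _ ≤ M + lam * m := by
        rw [abs_of_nonneg (by positivity : 0 ≤ lam * l0 (B.mulVec (x k)))]
        exact add_le_add (hM k) (mul_le_mul_of_nonneg_left (Nat.cast_le.2 (l0_le_card _)) hlam)
  have hφx : ∀ k, φ (x k) ≤ s k := fun k => by
    rw [hs_def, EReal.coe_sub]
    exact (EReal.le_sub_iff_add_le (Or.inl (EReal.coe_ne_bot _)) (Or.inl (EReal.coe_ne_top _))).2
      (hx k)
  have h0 : asympFn φ xb = 0 :=
    le_antisymm (asympFn_nonpos_of_tendsto hs hφx hnorm hdir) (asympFn_nonneg hc xb)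
  obtain ⟨k0, hk0⟩ := hals ρ hρ s ⟨_, hs⟩ x xb hφx hnorm hdir h0
  have hBdir : Tendsto (fun k => (l2 (x k))⁻¹ • B.mulVec (x k)) atTop (𝓝 (B.mulVec xb)) := by
    simpa [Function.comp_def, Matrix.mulVec_smul] using
      ((Matrix.mulVecLin B).continuous_of_finiteDimensional.tendsto xb).comp hdir
  obtain ⟨k1, hk1⟩ := eventually_atTop.1 (eventually_forall_ne_zero_of_tendsto_smul hBdir)
  refine ⟨max k0 k1, fun k hk => ?_⟩
  have hl0 : l0 (B.mulVec (x k - ρ • xb)) ≤ l0 (B.mulVec (x k)) := by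
    refine l0_le_of_forall_ne_zero fun i hi hxi => hi ?_
    have : B.mulVec xb i = 0 := not_not.1 fun h => hk1 k (le_of_max_le_right hk) i h hxi
    simp [Matrix.mulVec_sub, Matrix.mulVec_smul, hxi, this]
  calc φ (x k - ρ • xb) + ((lam * l0 (B.mulVec (x k - ρ • xb)) : ℝ) : EReal)
      ≤ (s k : EReal) + ((lam * l0 (B.mulVec (x k)) : ℝ) : EReal) :=
        add_le_add (hk0 k (le_of_max_le_left hk))
          (EReal.coe_le_coe_iff.2 (mul_le_mul_of_nonneg_left (Nat.cast_le.2 hl0) hlam))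
    _ = t k := by rw [← EReal.coe_add, hs_def, sub_add_cancel]

end penalized

section minimizer

variable {n : ℕ}

lemma LowerSemicontinuous.exists_forall_le_of_tendsto {α ι : Type*} [TopologicalSpace α]
    {l : Filter ι} [l.NeBot] {f : α → EReal} (hf : LowerSemicontinuous f) {K : Set α}
    (hK : IsCompact K) {x : ι → α} (hxK : ∀ᶠ k in l, x k ∈ K) {t : ι → ℝ} {a : ℝ}
    (ht : Tendsto t l (𝓝 a)) (hxt : ∀ k, f (x k) ≤ t k) (ha : ∀ y, (a : EReal) ≤ f y) :
    ∃ xs, ∀ y, f xs ≤ f y := by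
  obtain ⟨k, hk⟩ := hxK.exists
  obtain ⟨xs, -, hmin⟩ := (hf.lowerSemicontinuousOn K).exists_isMinOn ⟨x k, hk⟩ hK
  have hle : ∀ᶠ k in l, f xs ≤ t k := hxK.mono fun k hk => (hmin hk).trans (hxt k)
  exact ⟨xs, fun y => (ge_of_tendsto (EReal.tendsto_coe.2 ht) hle).trans (ha y)⟩

lemma exists_subseq_l2_tendsto_atTop {x : ℕ → Fin n → ℝ}
    (h : ¬ IsBoundedUnder (· ≤ ·) atTop fun k => l2 (x k)) :
    ∃ σ : ℕ → ℕ, Tendsto (fun j => l2 (x (σ j))) atTop atTop := by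
  simp only [IsBoundedUnder, IsBounded, eventually_map, not_exists, not_eventually, not_le] at h
  obtain ⟨σ, -, hσ⟩ := extraction_forall_of_frequently fun N : ℕ => h N
  exact ⟨σ, tendsto_atTop_mono (fun N => (hσ N).le) tendsto_natCast_atTop_atTop⟩

lemma exists_subseq_tendsto_direction {x : ℕ → Fin n → ℝ}
    (hx : Tendsto (fun k => l2 (x k)) atTop atTop) :
    ∃ v, l2 v = 1 ∧ ∃ σ : ℕ → ℕ, StrictMono σ ∧
      Tendsto (fun j => (l2 (x (σ j)))⁻¹ • x (σ j)) atTop (𝓝 v) := by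
  have hsphere : IsCompact {v : Fin n → ℝ | l2 v = 1} :=
    (isCompact_l2_le 1).of_isClosed_subset (isClosed_eq continuous_l2 continuous_const)
      fun v hv => hv.le
  have hunit : ∀ᶠ k in atTop, l2 ((l2 (x k))⁻¹ • x k) = 1 := by
    filter_upwards [hx.eventually_gt_atTop 0] with k hk
    rw [l2_smul, abs_inv, abs_of_pos hk, inv_mul_cancel₀ hk.ne']
  exact hsphere.tendsto_subseq' hunit.frequently

theorem ALS.exists_forall_le {f : (Fin n → ℝ) → EReal} (hals : ALS f)
    (hlsc : LowerSemicontinuous f) (hproper : ∃ x, f x ≠ ⊤) {c : ℝ}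
    (hc : ∀ x, (c : EReal) ≤ f x) : ∃ xs, ∀ x, f xs ≤ f x := by
  obtain ⟨x₀, hx₀⟩ := hproper
  obtain ⟨a, ha⟩ : ∃ a : ℝ, (a : EReal) = ⨅ x, f x :=
    ⟨_, EReal.coe_toReal (ne_top_of_le_ne_top hx₀ (iInf_le f x₀))
      (ne_bot_of_le_ne_bot (EReal.coe_ne_bot c) (le_iInf hc))⟩
  have ha_le : ∀ x, (a : EReal) ≤ f x := fun x => ha ▸ iInf_le f x
  obtain ⟨t, -, ht, ht_lim⟩ := exists_seq_strictAnti_tendsto' (lt_add_one a)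
  have hlevel : ∀ k, {x | f x ≤ t k}.Nonempty := fun k => by
    obtain ⟨x, hx⟩ := iInf_lt_iff.1 (ha ▸ EReal.coe_lt_coe_iff.2 (ht k).1)
    exact ⟨x, hx.le⟩
  choose x hx_mem hx_min using fun k => (hlsc.isClosed_preimage (t k)).exists_l2_le (hlevel k)
  by_cases hbd : IsBoundedUnder (· ≤ ·) atTop fun k => l2 (x k)
  · obtain ⟨M, hM⟩ := hbd
    exact hlsc.exists_forall_le_of_tendsto (isCompact_l2_le M) hM ht_lim hx_mem ha_le
  exfalso
  obtain ⟨σ, hσ⟩ := exists_subseq_l2_tendsto_atTop hbd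
  obtain ⟨v, hv, τ, hτ, hdir⟩ := exists_subseq_tendsto_direction hσ
  have hnorm : Tendsto (fun j => l2 (x (σ (τ j)))) atTop atTop := hσ.comp hτ.tendsto_atTop
  have ht_bdd : ∀ j, |t (σ (τ j))| ≤ |a| + 1 := fun j => by
    have := ht (σ (τ j))
    exact abs_le.2 ⟨by linarith [neg_abs_le a, this.1], by linarith [le_abs_self a, this.2]⟩
  have h0 : asympFn f v = 0 := le_antisymm
    (asympFn_nonpos_of_tendsto ht_bdd (fun j => hx_mem _) hnorm hdir) (asympFn_nonneg hc v)
  obtain ⟨k0, hk0⟩ := hals 1 one_pos _ ⟨_, ht_bdd⟩ _ v (fun j => hx_mem _) hnorm hdir h0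
  obtain ⟨j, hj, hlt⟩ := ((eventually_ge_atTop k0).and (eventually_l2_sub_lt hv hnorm hdir)).exists
  exact (hx_min _ _ (by simpa using hk0 j hj)).not_gt hlt

end minimizer

theorem Phi_attains_min_general (n m : ℕ) (φ : (Fin n → ℝ) → EReal)
    (hproper : ∃ x, φ x ≠ ⊤)
    (hlsc : LowerSemicontinuous φ) (hals : ALS φ)
    (hbdd : ∃ c : ℝ, ∀ x, (c : EReal) ≤ φ x)
    (B : Matrix (Fin m) (Fin n) ℝ) (lam : ℝ) (hlam : 0 < lam) :
    ∃ xs : Fin n → ℝ, ∀ x : Fin n → ℝ,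
      φ xs + ((lam * (l0 (B.mulVec xs) : ℝ) : ℝ) : EReal)
        ≤ φ x + ((lam * (l0 (B.mulVec x) : ℝ) : ℝ) : EReal) := by
  obtain ⟨c, hc⟩ := hbdd
  obtain ⟨x₀, hx₀⟩ := hproper
  have hle : ∀ x, φ x ≤ penalized φ B lam x := fun x =>
    le_add_of_nonneg_right (EReal.coe_nonneg.2 (by positivity))
  exact (hals.penalized hc B hlam.le).exists_forall_le (hlsc.penalized B hlam.le)
    ⟨x₀, (EReal.add_lt_top hx₀ (EReal.coe_ne_top _)).ne⟩ fun x => (hc x).trans (hle x)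

/-- If `φ` is proper, lsc, asymptotically level stable and bounded below, then
`Φ(x) = φ(x) + λ‖Bx‖₀` attains its infimum on ℝ^n. -/
theorem Phi_attains_min (n m : ℕ) (φ : (Fin n → ℝ) → EReal)
    (hproper : ∃ x, φ x ≠ ⊤) (hnb : ∀ x, φ x ≠ ⊥)
    (hlsc : LowerSemicontinuous φ) (hals : ALS φ)
    (hbdd : ∃ c : ℝ, ∀ x, (c : EReal) ≤ φ x)
    (B : Matrix (Fin m) (Fin n) ℝ) (lam : ℝ) (hlam : 0 < lam) :
    ∃ xs : Fin n → ℝ, ∀ x : Fin n → ℝ,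
      φ xs + ((lam * (l0 (B.mulVec xs) : ℝ) : ℝ) : EReal)
        ≤ φ x + ((lam * (l0 (B.mulVec x) : ℝ) : ℝ) : EReal) :=
  Phi_attains_min_general n m φ hproper hlsc hals hbdd B lam hlam
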